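/- Define F2(x,t) = 12i√2·( 12t − 32t³ − 12xt + 16x³t + 64t³x − 8x⁴t − 64x²t³ − 128t⁵ + i·(48x²t² − 4x³ + 6x² + 160t⁴ − 48xt² + 48t² + 2x⁴ − 3x) ) and H2(x,t) = 1024t⁶ + 768x²t⁴ − 768t⁴x + 1920t⁴ + 192x⁴t² − 384x³t² + 288xt² + 288t² + 16x⁶ − 48x⁵ + 72x⁴ − 72x³ + 72x² − 36x + 9. Then the function q^[2](x,t) = √2·(√2/2 + F2(x,t)/H2(x,t))·e^{2it} is a solution of the focusing nonlinear Schrödinger equation on all of ℝ². (Equivalently, q1^[2] = q2^[2] = (√2/2 + F2/H2)·e^{2it} is a second-order rogue wave solution of the Manakov system.) -/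

import Mathlib

open Complex

noncomputable section

/-- The focusing nonlinear Schrödinger equation
`i·∂q/∂t + ∂²q/∂x² + 2|q|²·q = 0` for `q : ℝ × ℝ → ℂ`, written `q (x, t)`. -/
def NLS (q : ℝ × ℝ → ℂ) : Prop :=
  ∀ x t : ℝ,
    Complex.I * deriv (fun t' => q (x, t')) t
      + deriv (fun x' => deriv (fun x'' => q (x'', t)) x') x
      + 2 * (‖q (x, t)‖ : ℂ) ^ 2 * q (x, t) = 0

/-- The Manakov system for `q1 q2 : ℝ × ℝ → ℂ`. -/
def Manakov (q1 q2 : ℝ × ℝ → ℂ) : Prop :=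
  (∀ x t : ℝ,
    Complex.I * deriv (fun t' => q1 (x, t')) t
      + deriv (fun x' => deriv (fun x'' => q1 (x'', t)) x') x
      + 2 * ((‖q1 (x, t)‖ : ℂ) ^ 2 + (‖q2 (x, t)‖ : ℂ) ^ 2) * q1 (x, t) = 0) ∧
  (∀ x t : ℝ,
    Complex.I * deriv (fun t' => q2 (x, t')) t
      + deriv (fun x' => deriv (fun x'' => q2 (x'', t)) x') x
      + 2 * ((‖q1 (x, t)‖ : ℂ) ^ 2 + (‖q2 (x, t)‖ : ℂ) ^ 2) * q2 (x, t) = 0)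

/-- The denominator `H2` of the second-order non-symmetric rogue wave. -/
def H2 (x t : ℝ) : ℝ :=
  1024 * t ^ 6 + 768 * x ^ 2 * t ^ 4 - 768 * t ^ 4 * x + 1920 * t ^ 4
    + 192 * x ^ 4 * t ^ 2 - 384 * x ^ 3 * t ^ 2 + 288 * x * t ^ 2 + 288 * t ^ 2
    + 16 * x ^ 6 - 48 * x ^ 5 + 72 * x ^ 4 - 72 * x ^ 3 + 72 * x ^ 2 - 36 * x + 9

/-- The numerator `F2` of the second-order non-symmetric rogue wave:
`F2 = 12i√2·(A + i·B)` with real polynomials `A`, `B`. -/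
def F2 (x t : ℝ) : ℂ :=
  12 * Complex.I * ((Real.sqrt 2 : ℝ) : ℂ) *
    (((12 * t - 32 * t ^ 3 - 12 * x * t + 16 * x ^ 3 * t + 64 * t ^ 3 * x - 8 * x ^ 4 * t
          - 64 * x ^ 2 * t ^ 3 - 128 * t ^ 5 : ℝ) : ℂ)
      + Complex.I *
        ((48 * x ^ 2 * t ^ 2 - 4 * x ^ 3 + 6 * x ^ 2 + 160 * t ^ 4 - 48 * x * t ^ 2
            + 48 * t ^ 2 + 2 * x ^ 4 - 3 * x : ℝ) : ℂ))

/-- The second-order non-symmetric doubly-localized rogue wave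
`q^[2](x,t) = √2·(√2/2 + F2/H2)·e^{2it}` of the focusing NLS equation. -/
def qtwo (p : ℝ × ℝ) : ℂ :=
  ((Real.sqrt 2 : ℝ) : ℂ)
    * (((Real.sqrt 2 / 2 : ℝ) : ℂ) + F2 p.1 p.2 / ((H2 p.1 p.2 : ℝ) : ℂ))
    * Complex.exp (2 * Complex.I * (p.2 : ℂ))

/-!
Multiplying out `√2` gives `q^[2] = (G2re + i G2im) / H2 · e^{2it}` with real polynomials
`G2re = H2 - 24 B` and `G2im = 24 A`, where `F2 = 12i√2 (A + iB)`, and `H2 > 0` is a sum of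
squares. The phase `e^{2it}` turns NLS into `i g_t + g_xx + 2|g|² g = 2g` for the quotient `g`,
and clearing denominators reduces this to the Hirota bilinear equations
`(i D_t + D_x²)(G·H2) = 0` and `D_x²(H2·H2) = 2(|G|² - H2²)` for `G = G2re + i G2im`: three
polynomial identities. The Manakov system with `q1 = q2 = u` is the NLS equation for `√2 u`.
-/

def nlsResidual (κ : ℂ) (q : ℝ × ℝ → ℂ) (x t : ℝ) : ℂ :=
  I * deriv (fun t' => q (x, t')) t + deriv (fun x' => deriv (fun x'' => q (x'', t)) x') x
    + κ * (‖q (x, t)‖ : ℂ) ^ 2 * q (x, t)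

theorem nls_iff_forall_nlsResidual {q : ℝ × ℝ → ℂ} : NLS q ↔ ∀ x t, nlsResidual 2 q x t = 0 :=
  Iff.rfl

theorem manakov_self_iff_forall_nlsResidual {u : ℝ × ℝ → ℂ} :
    Manakov u u ↔ ∀ x t, nlsResidual 4 u x t = 0 := by
  have h : ∀ x t, nlsResidual 4 u x t = I * deriv (fun t' => u (x, t')) t
      + deriv (fun x' => deriv (fun x'' => u (x'', t)) x') x
      + 2 * ((‖u (x, t)‖ : ℂ) ^ 2 + (‖u (x, t)‖ : ℂ) ^ 2) * u (x, t) := by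
    intro x t
    rw [nlsResidual]
    ring
  simp only [Manakov, h, and_self]

theorem nlsResidual_const_mul (κ c : ℂ) (q : ℝ × ℝ → ℂ) (x t : ℝ) :
    nlsResidual κ (fun p => c * q p) x t = c * nlsResidual (κ * ‖c‖ ^ 2) q x t := by
  simp only [nlsResidual, deriv_const_mul_field', norm_mul]
  push_cast
  ring

theorem nls_const_mul_iff_manakov_self {c : ℂ} (hc : ‖c‖ ^ 2 = 2) (u : ℝ × ℝ → ℂ) :
    NLS (fun p => c * u p) ↔ Manakov u u := by
  have hc0 : c ≠ 0 := by
    rintro rfl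
    norm_num at hc
  have hκ : (2 : ℂ) * (‖c‖ : ℂ) ^ 2 = 4 := by
    rw [← ofReal_pow, hc]
    norm_num
  simp only [nls_iff_forall_nlsResidual, manakov_self_iff_forall_nlsResidual,
    nlsResidual_const_mul, hκ, mul_eq_zero, hc0, false_or]

theorem nlsResidual_mul_exp (κ : ℂ) (ω : ℝ) {f : ℝ × ℝ → ℂ} {x t : ℝ}
    (hf : DifferentiableAt ℝ (fun t' => f (x, t')) t) :
    nlsResidual κ (fun p => f p * exp (ω * I * p.2)) x t
      = (nlsResidual κ f x t - ω * f (x, t)) * exp (ω * I * t) := by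
  have hphase : HasDerivAt (fun t' : ℝ => exp (ω * I * t')) (exp (ω * I * t) * (ω * I)) t := by
    have := ((hasDerivAt_id (t : ℂ)).const_mul ((ω : ℂ) * I)).cexp
    simpa using this.comp_ofReal
  have hnorm : ‖exp (ω * I * t)‖ = 1 := by
    rw [show (ω : ℂ) * I * t = ((ω * t : ℝ) : ℂ) * I by push_cast; ring]
    exact norm_exp_ofReal_mul_I _
  have hderiv : deriv (fun t' => f (x, t') * exp (ω * I * t')) t
      = deriv (fun t' => f (x, t')) t * exp (ω * I * t) + f (x, t) * (exp (ω * I * t) * (ω * I)) :=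
    (hf.hasDerivAt.mul hphase).deriv
  simp only [nlsResidual, deriv_mul_const_field', hderiv, norm_mul, hnorm, mul_one]
  linear_combination ω * f (x, t) * exp (ω * I * t) * I_sq

structure HasPartials (f fx fxx ft : ℝ → ℝ → ℝ) : Prop where
  hasDerivAt_x : ∀ x t, HasDerivAt (f · t) (fx x t) x
  hasDerivAt_xx : ∀ x t, HasDerivAt (fx · t) (fxx x t) x
  hasDerivAt_t : ∀ x t, HasDerivAt (f x ·) (ft x t) t

theorem HasDerivAt.ofReal_add_ofReal_mul_I {n m : ℝ → ℝ} {n' m' x : ℝ} (hn : HasDerivAt n n' x)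
    (hm : HasDerivAt m m' x) : HasDerivAt (fun y => (n y : ℂ) + m y * I) (n' + m' * I) x :=
  hn.ofReal_comp.add (hm.ofReal_comp.mul_const I)

theorem norm_ofReal_add_ofReal_mul_I_div_sq (n m h : ℝ) :
    (‖((n : ℂ) + m * I) / h‖ : ℂ) ^ 2 = (n ^ 2 + m ^ 2) / h ^ 2 := by
  rw [← ofReal_pow, norm_div, div_pow, Complex.sq_norm, normSq_add_mul_I, norm_real,
    Real.norm_eq_abs, sq_abs]
  push_cast
  rfl

/-- `hre`, `him` and `hHH` are the Hirota bilinear equations `(i D_t + D_x²) (G · H) = 0` and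
`D_x² (H · H) = 2 (|G|² - H²)` for `G = N + i M`. -/
theorem nlsResidual_div_of_bilinear {N Nx Nxx Nt M Mx Mxx Mt H Hx Hxx Ht : ℝ → ℝ → ℝ}
    (hN : HasPartials N Nx Nxx Nt) (hM : HasPartials M Mx Mxx Mt) (hH : HasPartials H Hx Hxx Ht)
    {x t : ℝ} (hH0 : ∀ x', H x' t ≠ 0)
    (hre : Nxx x t * H x t - 2 * Nx x t * Hx x t + N x t * Hxx x t
      = Mt x t * H x t - M x t * Ht x t)
    (him : Mxx x t * H x t - 2 * Mx x t * Hx x t + M x t * Hxx x t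
      = N x t * Ht x t - Nt x t * H x t)
    (hHH : H x t * Hxx x t - Hx x t ^ 2 = N x t ^ 2 + M x t ^ 2 - H x t ^ 2) :
    nlsResidual 2 (fun p => (N p.1 p.2 + M p.1 p.2 * I) / H p.1 p.2) x t
      = 2 * ((N x t + M x t * I) / H x t) := by
  have hH0' : ∀ x', (H x' t : ℂ) ≠ 0 := fun x' => ofReal_ne_zero.2 (hH0 x')
  have hx : ∀ x', HasDerivAt (fun y : ℝ => (N y t + M y t * I) / H y t)
      (((Nx x' t + Mx x' t * I) * H x' t - (N x' t + M x' t * I) * Hx x' t) / H x' t ^ 2) x' :=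
    fun x' => ((hN.hasDerivAt_x x' t).ofReal_add_ofReal_mul_I (hM.hasDerivAt_x x' t)).div
      (hH.hasDerivAt_x x' t).ofReal_comp (hH0' x')
  have hxx := ((((hN.hasDerivAt_xx x t).ofReal_add_ofReal_mul_I (hM.hasDerivAt_xx x t)).mul
      (hH.hasDerivAt_x x t).ofReal_comp).sub
      (((hN.hasDerivAt_x x t).ofReal_add_ofReal_mul_I (hM.hasDerivAt_x x t)).mul
      (hH.hasDerivAt_xx x t).ofReal_comp)).div
      ((hH.hasDerivAt_x x t).ofReal_comp.pow 2) (pow_ne_zero 2 (hH0' x))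
  have ht := ((hN.hasDerivAt_t x t).ofReal_add_ofReal_mul_I (hM.hasDerivAt_t x t)).div
      (hH.hasDerivAt_t x t).ofReal_comp (hH0' x)
  have hderiv_x : deriv (fun y : ℝ => (N y t + M y t * I) / H y t) = _ :=
    funext fun x' => (hx x').deriv
  have hderiv_xx : deriv (fun x' : ℝ => ((Nx x' t + Mx x' t * I) * H x' t
      - (N x' t + M x' t * I) * Hx x' t) / (H x' t : ℂ) ^ 2) x = _ := hxx.deriv
  have hderiv_t : deriv (fun t' : ℝ => (N x t' + M x t' * I : ℂ) / H x t') t = _ := ht.deriv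
  simp only [nlsResidual, hderiv_x, hderiv_xx, hderiv_t, norm_ofReal_add_ofReal_mul_I_div_sq,
    Pi.mul_apply, Pi.sub_apply, Pi.pow_apply, Nat.cast_ofNat, Nat.reduceSub, pow_one]
  field_simp
  rw [div_eq_div_iff (pow_ne_zero 3 (hH0' x)) (hH0' x)]
  have hre' : (Nxx x t * H x t - 2 * Nx x t * Hx x t + N x t * Hxx x t : ℂ)
      = Mt x t * H x t - M x t * Ht x t := by exact_mod_cast hre
  have him' : (Mxx x t * H x t - 2 * Mx x t * Hx x t + M x t * Hxx x t : ℂ)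
      = N x t * Ht x t - Nt x t * H x t := by exact_mod_cast him
  have hHH' : (H x t * Hxx x t - Hx x t ^ 2 : ℂ) = N x t ^ 2 + M x t ^ 2 - H x t ^ 2 := by
    exact_mod_cast hHH
  linear_combination (H x t : ℂ) * ((H x t : ℂ) * (hre' + I * him')
      - 2 * (N x t + M x t * I) * hHH')
    + (H x t : ℂ) ^ 2 * (Mt x t * H x t - M x t * Ht x t) * I_sq

theorem nls_mul_exp_of_bilinear {N Nx Nxx Nt M Mx Mxx Mt H Hx Hxx Ht : ℝ → ℝ → ℝ}
    (hN : HasPartials N Nx Nxx Nt) (hM : HasPartials M Mx Mxx Mt) (hH : HasPartials H Hx Hxx Ht)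
    (hH0 : ∀ x t, H x t ≠ 0)
    (hre : ∀ x t, Nxx x t * H x t - 2 * Nx x t * Hx x t + N x t * Hxx x t
      = Mt x t * H x t - M x t * Ht x t)
    (him : ∀ x t, Mxx x t * H x t - 2 * Mx x t * Hx x t + M x t * Hxx x t
      = N x t * Ht x t - Nt x t * H x t)
    (hHH : ∀ x t, H x t * Hxx x t - Hx x t ^ 2 = N x t ^ 2 + M x t ^ 2 - H x t ^ 2) :
    NLS (fun p => (N p.1 p.2 + M p.1 p.2 * I) / H p.1 p.2 * exp (2 * I * p.2)) := by
  rw [nls_iff_forall_nlsResidual]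
  intro x t
  have hdiff : DifferentiableAt ℝ (fun t' => (N x t' + M x t' * I : ℂ) / H x t') t :=
    (((hN.hasDerivAt_t x t).ofReal_add_ofReal_mul_I (hM.hasDerivAt_t x t)).div
      (hH.hasDerivAt_t x t).ofReal_comp (ofReal_ne_zero.2 (hH0 x t))).differentiableAt
  have hgauge := nlsResidual_mul_exp 2 2
    (f := fun p => (N p.1 p.2 + M p.1 p.2 * I) / H p.1 p.2) hdiff
  rw [nlsResidual_div_of_bilinear hN hM hH (hH0 · t) (hre x t) (him x t) (hHH x t)] at hgauge
  simpa only [ofReal_ofNat, sub_self, zero_mul] using hgauge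

def H2_x (x t : ℝ) : ℝ :=
  96 * x ^ 5 - 240 * x ^ 4 + 768 * x ^ 3 * t ^ 2 + 288 * x ^ 3 - 1152 * x ^ 2 * t ^ 2
    - 216 * x ^ 2 + 1536 * x * t ^ 4 + 144 * x - 768 * t ^ 4 + 288 * t ^ 2 - 36

def H2_xx (x t : ℝ) : ℝ :=
  480 * x ^ 4 - 960 * x ^ 3 + 2304 * x ^ 2 * t ^ 2 + 864 * x ^ 2 - 2304 * x * t ^ 2 - 432 * x
    + 1536 * t ^ 4 + 144

def H2_t (x t : ℝ) : ℝ :=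
  384 * x ^ 4 * t - 768 * x ^ 3 * t + 3072 * x ^ 2 * t ^ 3 - 3072 * x * t ^ 3 + 576 * x * t
    + 6144 * t ^ 5 + 7680 * t ^ 3 + 576 * t

def G2re (x t : ℝ) : ℝ :=
  1024 * t ^ 6 + 768 * x ^ 2 * t ^ 4 - 768 * t ^ 4 * x - 1920 * t ^ 4
    + 192 * x ^ 4 * t ^ 2 - 384 * x ^ 3 * t ^ 2 - 1152 * x ^ 2 * t ^ 2 + 1440 * x * t ^ 2
    - 864 * t ^ 2 + 16 * x ^ 6 - 48 * x ^ 5 + 24 * x ^ 4 + 24 * x ^ 3 - 72 * x ^ 2 + 36 * x + 9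

def G2re_x (x t : ℝ) : ℝ :=
  1536 * x * t ^ 4 - 768 * t ^ 4 + 768 * x ^ 3 * t ^ 2 - 1152 * x ^ 2 * t ^ 2 - 2304 * x * t ^ 2
    + 1440 * t ^ 2 + 96 * x ^ 5 - 240 * x ^ 4 + 96 * x ^ 3 + 72 * x ^ 2 - 144 * x + 36

def G2re_xx (x t : ℝ) : ℝ :=
  1536 * t ^ 4 + 2304 * x ^ 2 * t ^ 2 - 2304 * x * t ^ 2 - 2304 * t ^ 2 + 480 * x ^ 4
    - 960 * x ^ 3 + 288 * x ^ 2 + 144 * x - 144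

def G2re_t (x t : ℝ) : ℝ :=
  6144 * t ^ 5 + 3072 * x ^ 2 * t ^ 3 - 3072 * x * t ^ 3 - 7680 * t ^ 3 + 384 * x ^ 4 * t
    - 768 * x ^ 3 * t - 2304 * x ^ 2 * t + 2880 * x * t - 1728 * t

def G2im (x t : ℝ) : ℝ :=
  288 * t - 768 * t ^ 3 - 288 * x * t + 384 * x ^ 3 * t + 1536 * t ^ 3 * x - 192 * x ^ 4 * t
    - 1536 * x ^ 2 * t ^ 3 - 3072 * t ^ 5

def G2im_x (x t : ℝ) : ℝ :=
  -288 * t + 1152 * x ^ 2 * t + 1536 * t ^ 3 - 768 * x ^ 3 * t - 3072 * x * t ^ 3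

def G2im_xx (x t : ℝ) : ℝ :=
  2304 * x * t - 2304 * x ^ 2 * t - 3072 * t ^ 3

def G2im_t (x t : ℝ) : ℝ :=
  288 - 2304 * t ^ 2 - 288 * x + 384 * x ^ 3 + 4608 * x * t ^ 2 - 192 * x ^ 4
    - 4608 * x ^ 2 * t ^ 2 - 15360 * t ^ 4

theorem hasPartials_H2 : HasPartials H2 H2_x H2_xx H2_t := by
  constructor <;> intro x t <;> refine (DifferentiableAt.hasDerivAt ?_).congr_deriv ?_ <;>
    simp (disch := fun_prop) [H2, H2_x, H2_xx, H2_t] <;> ring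

theorem hasPartials_G2re : HasPartials G2re G2re_x G2re_xx G2re_t := by
  constructor <;> intro x t <;> refine (DifferentiableAt.hasDerivAt ?_).congr_deriv ?_ <;>
    simp (disch := fun_prop) [G2re, G2re_x, G2re_xx, G2re_t] <;> ring

theorem hasPartials_G2im : HasPartials G2im G2im_x G2im_xx G2im_t := by
  constructor <;> intro x t <;> refine (DifferentiableAt.hasDerivAt ?_).congr_deriv ?_ <;>
    simp (disch := fun_prop) [G2im, G2im_x, G2im_xx, G2im_t] <;> ring

theorem H2_pos (x t : ℝ) : 0 < H2 x t := by
  have h : H2 x t = 1024 * (t ^ 3) ^ 2 + 768 * (t ^ 2 * (x - 1 / 2)) ^ 2 + 1728 * (t ^ 2) ^ 2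
      + 192 * (t * (x ^ 2 - x - 1)) ^ 2 + 192 * (t * (x - 1 / 4)) ^ 2 + 84 * t ^ 2
      + (4 * x ^ 3 - 6 * x ^ 2 + 9 / 2 * x - 9 / 4) ^ 2 + 99 / 4 * (x - 7 / 22) ^ 2 + 63 / 44 := by
    unfold H2
    ring
  rw [h]
  positivity

theorem G2_H2_bilinear_re (x t : ℝ) :
    G2re_xx x t * H2 x t - 2 * G2re_x x t * H2_x x t + G2re x t * H2_xx x t
      = G2im_t x t * H2 x t - G2im x t * H2_t x t := by
  simp only [G2re, G2re_x, G2re_xx, G2im, G2im_t, H2, H2_x, H2_xx, H2_t]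
  ring

theorem G2_H2_bilinear_im (x t : ℝ) :
    G2im_xx x t * H2 x t - 2 * G2im_x x t * H2_x x t + G2im x t * H2_xx x t
      = G2re x t * H2_t x t - G2re_t x t * H2 x t := by
  simp only [G2re, G2re_t, G2im, G2im_x, G2im_xx, H2, H2_x, H2_xx, H2_t]
  ring

theorem H2_bilinear (x t : ℝ) :
    H2 x t * H2_xx x t - H2_x x t ^ 2 = G2re x t ^ 2 + G2im x t ^ 2 - H2 x t ^ 2 := by
  simp only [G2re, G2im, H2, H2_x, H2_xx]
  ring

theorem sqrt_two_mul_add_F2_div_H2 (x t : ℝ) :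
    ((Real.sqrt 2 : ℝ) : ℂ) * (((Real.sqrt 2 / 2 : ℝ) : ℂ) + F2 x t / ((H2 x t : ℝ) : ℂ))
      = (G2re x t + G2im x t * I) / H2 x t := by
  have hH : ((H2 x t : ℝ) : ℂ) ≠ 0 := ofReal_ne_zero.2 (H2_pos x t).ne'
  have hs : ((Real.sqrt 2 : ℝ) : ℂ) ^ 2 = 2 := by
    rw [← ofReal_pow, Real.sq_sqrt zero_le_two]
    norm_num
  field_simp
  simp only [F2, G2re, G2im, H2]
  push_cast
  ring_nf
  simp only [hs, I_sq]
  ring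

/-- `q^[2]` solves the focusing NLS equation on all of `ℝ²`; equivalently,
`q1^[2] = q2^[2] = (√2/2 + F2/H2)·e^{2it}` is a second-order rogue wave solution of the
Manakov system. -/
theorem qtwo_solves_NLS :
    NLS qtwo ∧
    Manakov
      (fun p => (((Real.sqrt 2 / 2 : ℝ) : ℂ) + F2 p.1 p.2 / ((H2 p.1 p.2 : ℝ) : ℂ))
        * Complex.exp (2 * Complex.I * (p.2 : ℂ)))
      (fun p => (((Real.sqrt 2 / 2 : ℝ) : ℂ) + F2 p.1 p.2 / ((H2 p.1 p.2 : ℝ) : ℂ))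
        * Complex.exp (2 * Complex.I * (p.2 : ℂ))) := by
  have hq : qtwo = fun p =>
      (G2re p.1 p.2 + G2im p.1 p.2 * I) / H2 p.1 p.2 * exp (2 * I * p.2) := by
    funext p
    rw [qtwo, sqrt_two_mul_add_F2_div_H2]
  have hNLS : NLS qtwo := hq ▸ nls_mul_exp_of_bilinear hasPartials_G2re hasPartials_G2im
    hasPartials_H2 (fun x t => (H2_pos x t).ne') G2_H2_bilinear_re G2_H2_bilinear_im H2_bilinear
  have hsqrt : ‖((Real.sqrt 2 : ℝ) : ℂ)‖ ^ 2 = 2 := by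
    rw [norm_real, Real.norm_eq_abs, sq_abs, Real.sq_sqrt zero_le_two]
  refine ⟨hNLS, (nls_const_mul_iff_manakov_self hsqrt _).1 ?_⟩
  convert hNLS using 2 with p
  exact (mul_assoc _ _ _).symm
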